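/- For any fixed real number r0 > 0, the series I_3(m, r0) tends to 0 as the integer m tends to infinity, where I_3(m, r0) = ∑_{k=1}^∞ ((−1)^k / k!) · (Γ(m+1) · √(2m+2) / Γ(m+k+1)) · (r0/2)^{2k} · r0^{−1}. -/
import Mathlib


open Real Filter Topology

/-- `I₃(m, r₀)` from the paper:
`∑_{k=1}^∞ ((−1)^k / k!) (Γ(m+1) √(2m+2) / Γ(m+k+1)) (r₀/2)^{2k} r₀^{−1}`. -/
noncomputable def I3 (m : ℕ) (r0 : ℝ) : ℝ :=
  ∑' k : ℕ,
    ((-1 : ℝ) ^ (k + 1) / (Nat.factorial (k + 1) : ℝ)) *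
      (Real.Gamma ((m : ℝ) + 1) * Real.sqrt (2 * (m : ℝ) + 2) /
        Real.Gamma ((m : ℝ) + ((k : ℝ) + 1) + 1)) *
      (r0 / 2) ^ (2 * (k + 1)) * r0⁻¹

theorem I3_tendsto_zero (r0 : ℝ) (hr0 : 0 < r0) :
    Tendsto (fun m : ℕ => I3 m r0) atTop (𝓝 0) := by
  set x : ℝ := (r0 / 2) ^ 2 with hxdef
  have hx0 : 0 ≤ x := sq_nonneg _
  set c : ℕ → ℝ := fun k => x ^ (k + 1) / (Nat.factorial (k + 1) : ℝ) * r0⁻¹ with hcdef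
  have hc0 : ∀ k, 0 ≤ c k := by
    intro k
    have : (0:ℝ) < Nat.factorial (k+1) := by positivity
    positivity
  have hcsum : Summable c :=
    ((summable_nat_add_iff 1).mpr (Real.summable_pow_div_factorial x)).mul_right _
  set C : ℝ := ∑' k, c k with hCdef
  set D : ℕ → ℝ := fun m => Real.sqrt 2 / Real.sqrt ((m : ℝ) + 1) with hDdef
  have hD0 : ∀ m, 0 ≤ D m := fun m => by positivity
  -- term-wise bound
  have hterm : ∀ m k : ℕ,
      |((-1 : ℝ) ^ (k + 1) / (Nat.factorial (k + 1) : ℝ)) *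
        (Real.Gamma ((m : ℝ) + 1) * Real.sqrt (2 * (m : ℝ) + 2) /
          Real.Gamma ((m : ℝ) + ((k : ℝ) + 1) + 1)) *
        (r0 / 2) ^ (2 * (k + 1)) * r0⁻¹| ≤ D m * c k := by
    intro m k
    have hG1 : Real.Gamma ((m : ℝ) + 1) = m.factorial := Real.Gamma_nat_eq_factorial m
    have hG2 : Real.Gamma ((m : ℝ) + ((k : ℝ) + 1) + 1) = (m + k + 1).factorial := by
      have h : (m : ℝ) + ((k : ℝ) + 1) + 1 = ((m + k + 1 : ℕ) : ℝ) + 1 := by push_cast; ring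
      rw [h, Real.Gamma_nat_eq_factorial]
    have hpow : (r0 / 2) ^ (2 * (k + 1)) = x ^ (k + 1) := by
      rw [hxdef, ← pow_mul]
    have hsm : Real.sqrt (2 * (m : ℝ) + 2) = Real.sqrt 2 * Real.sqrt ((m : ℝ) + 1) := by
      rw [← Real.sqrt_mul (by norm_num : (0:ℝ) ≤ 2)]
      ring_nf
    have hmid : (m.factorial : ℝ) * Real.sqrt (2 * (m : ℝ) + 2) / ((m + k + 1).factorial : ℝ)
        ≤ D m := by
      have hfacN : m.factorial * (m + 1) ≤ (m + k + 1).factorial := by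
        calc m.factorial * (m + 1) ≤ m.factorial * (m + 1) ^ (k + 1) := by
              exact Nat.mul_le_mul_left _ (Nat.le_self_pow (Nat.succ_ne_zero k) _)
          _ ≤ (m + k + 1).factorial := by
              have := Nat.factorial_mul_pow_le_factorial (m := m) (n := k + 1)
              simpa [Nat.add_assoc] using this
      have hfac : (m.factorial : ℝ) * ((m : ℝ) + 1) ≤ ((m + k + 1).factorial : ℝ) := by
        exact_mod_cast hfacN
      have hfpos : (0:ℝ) < ((m + k + 1).factorial : ℝ) := by positivity
      have hspos : (0:ℝ) < Real.sqrt ((m : ℝ) + 1) := Real.sqrt_pos.mpr (by positivity)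
      rw [hsm, hDdef, div_le_div_iff₀ hfpos hspos]
      have hss : Real.sqrt ((m : ℝ) + 1) * Real.sqrt ((m : ℝ) + 1) = (m : ℝ) + 1 :=
        Real.mul_self_sqrt (by positivity)
      have h2 : (0:ℝ) ≤ Real.sqrt 2 := Real.sqrt_nonneg 2
      have e : (m.factorial : ℝ) * (Real.sqrt 2 * Real.sqrt ((m : ℝ) + 1)) *
          Real.sqrt ((m : ℝ) + 1) = Real.sqrt 2 * ((m.factorial : ℝ) * ((m : ℝ) + 1)) := by
        linear_combination (m.factorial : ℝ) * Real.sqrt 2 * hss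
      rw [e]
      exact mul_le_mul_of_nonneg_left hfac h2
    have habs : |((-1 : ℝ) ^ (k + 1) / (Nat.factorial (k + 1) : ℝ)) *
        (Real.Gamma ((m : ℝ) + 1) * Real.sqrt (2 * (m : ℝ) + 2) /
          Real.Gamma ((m : ℝ) + ((k : ℝ) + 1) + 1)) *
        (r0 / 2) ^ (2 * (k + 1)) * r0⁻¹|
        = (1 / (Nat.factorial (k + 1) : ℝ)) *
          ((m.factorial : ℝ) * Real.sqrt (2 * (m : ℝ) + 2) / ((m + k + 1).factorial : ℝ)) *
          x ^ (k + 1) * r0⁻¹ := by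
      rw [hG1, hG2, hpow]
      rw [abs_mul, abs_mul, abs_mul, abs_div, abs_pow, abs_neg, abs_one, one_pow,
        abs_div, abs_mul, Nat.abs_cast, Nat.abs_cast, Nat.abs_cast,
        abs_of_nonneg (Real.sqrt_nonneg _),
        abs_of_nonneg (by positivity : (0:ℝ) ≤ x ^ (k+1)),
        abs_of_nonneg (by positivity : (0:ℝ) ≤ r0⁻¹)]
    rw [habs, hcdef]
    have hfk : (0:ℝ) < Nat.factorial (k+1) := by positivity
    calc (1 / (Nat.factorial (k + 1) : ℝ)) *
          ((m.factorial : ℝ) * Real.sqrt (2 * (m : ℝ) + 2) / ((m + k + 1).factorial : ℝ)) *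
          x ^ (k + 1) * r0⁻¹
        ≤ (1 / (Nat.factorial (k + 1) : ℝ)) * D m * x ^ (k + 1) * r0⁻¹ := by
          gcongr
        _ = D m * (x ^ (k + 1) / (Nat.factorial (k + 1) : ℝ) * r0⁻¹) := by ring
  -- summability of terms
  have hsumabs : ∀ m : ℕ, Summable (fun k : ℕ =>
      |((-1 : ℝ) ^ (k + 1) / (Nat.factorial (k + 1) : ℝ)) *
        (Real.Gamma ((m : ℝ) + 1) * Real.sqrt (2 * (m : ℝ) + 2) /
          Real.Gamma ((m : ℝ) + ((k : ℝ) + 1) + 1)) *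
        (r0 / 2) ^ (2 * (k + 1)) * r0⁻¹|) := by
    intro m
    exact Summable.of_nonneg_of_le (fun k => abs_nonneg _) (hterm m) (hcsum.mul_left (D m))
  -- main bound
  have key : ∀ m : ℕ, ‖I3 m r0‖ ≤ D m * C := by
    intro m
    calc ‖I3 m r0‖ ≤ ∑' k, |((-1 : ℝ) ^ (k + 1) / (Nat.factorial (k + 1) : ℝ)) *
        (Real.Gamma ((m : ℝ) + 1) * Real.sqrt (2 * (m : ℝ) + 2) /
          Real.Gamma ((m : ℝ) + ((k : ℝ) + 1) + 1)) *
        (r0 / 2) ^ (2 * (k + 1)) * r0⁻¹| := norm_tsum_le_tsum_norm (hsumabs m)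
      _ ≤ ∑' k, D m * c k := Summable.tsum_le_tsum (hterm m) (hsumabs m) (hcsum.mul_left (D m))
      _ = D m * C := tsum_mul_left
  -- the bound tends to zero
  have hDten : Tendsto (fun m : ℕ => D m * C) atTop (𝓝 0) := by
    have h1 : Tendsto (fun m : ℕ => Real.sqrt ((m : ℝ) + 1)) atTop atTop := by
      have hs : Tendsto Real.sqrt atTop atTop :=
        (tendsto_rpow_atTop (by norm_num : (0:ℝ) < 1/2)).congr
          (fun x => (Real.sqrt_eq_rpow x).symm)
      exact hs.comp (tendsto_atTop_add_const_right _ 1 tendsto_natCast_atTop_atTop)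
    have h2 : Tendsto (fun m : ℕ => (Real.sqrt ((m : ℝ) + 1))⁻¹) atTop (𝓝 0) :=
      h1.inv_tendsto_atTop
    have h3 : Tendsto (fun m : ℕ => Real.sqrt 2 * C * (Real.sqrt ((m : ℝ) + 1))⁻¹)
        atTop (𝓝 (Real.sqrt 2 * C * 0)) := h2.const_mul _
    rw [mul_zero] at h3
    refine h3.congr (fun m => ?_)
    rw [hDdef]
    field_simp
  exact squeeze_zero_norm key hDten
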